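/- Let 0 < a < b, and let I := [−a, a) carry equal cutoff radii ε_I = ε'_I = ε at both endpoints and J := [−b, b) carry equal cutoff radii ε_J = ε'_J = ε' at both endpoints, where 0 < ε ≤ a, 0 < ε' ≤ b, ε < (b−a)/2 and ε' < (b−a)/2. Then the operators defined on the Fourier side by the bell functions of I and J satisfy 𝒫_I 𝒫_J = 𝒫_J 𝒫_I = 𝒫_I as operators on L²(ℝ). -/

import Mathlib

open MeasureTheory

noncomputable section

/-- The bell function of the interval `[l, r)` with cutoff radii `εl, εr`:
`b(ξ) = ρ((ξ−l)/εl) · ρ((r−ξ)/εr)`. -/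
def bell (ρ : ℝ → ℝ) (l r εl εr ξ : ℝ) : ℝ := ρ ((ξ - l) / εl) * ρ ((r - ξ) / εr)

/-- The operator `𝒫_I` read on the Fourier side: if `g = f̂`, then
`(𝒫_I f)^ = fourierSideP ρ l r εl εr g`. -/
def fourierSideP (ρ : ℝ → ℝ) (l r εl εr : ℝ) (g : ℝ → ℂ) (ξ : ℝ) : ℂ :=
  (bell ρ l r εl εr ξ : ℝ) *
    ((bell ρ l r εl εr ξ : ℝ) * g ξ +
      (bell ρ l r εl εr (2 * l - ξ) : ℝ) * g (2 * l - ξ) -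
      (bell ρ l r εl εr (2 * r - ξ) : ℝ) * g (2 * r - ξ))

/-- nestedness of projections: for `I = [−a, a)` with equal cutoff radii `ε`
and `J = [−b, b)` with equal cutoff radii `ε'`, where `0 < a < b`, `0 < ε ≤ a`,
`0 < ε' ≤ b`, `ε < (b−a)/2`, `ε' < (b−a)/2`, one has `𝒫_I 𝒫_J = 𝒫_J 𝒫_I = 𝒫_I` as
operators on `L²(ℝ)`.  Since `𝒫_I` is defined on the Fourier side and the Fourier
transform is unitary on `L²(ℝ)`, the operator identities are stated for `g = f̂`
ranging over `L²(ℝ)`. -/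
theorem stmt12 (ρ : ℝ → ℝ) (hρsmooth : ContDiff ℝ (⊤ : ℕ∞) ρ)
    (hρ0 : ∀ ξ : ℝ, ξ ≤ -1 → ρ ξ = 0) (hρ1 : ∀ ξ : ℝ, 1 ≤ ξ → ρ ξ = 1)
    (hρpyth : ∀ ξ : ℝ, ρ ξ ^ 2 + ρ (-ξ) ^ 2 = 1)
    (a b ε ε' : ℝ) (hab : 0 < a) (hab' : a < b)
    (hε : 0 < ε) (hεa : ε ≤ a) (hε' : 0 < ε') (hε'b : ε' ≤ b)
    (hεgap : ε < (b - a) / 2) (hε'gap : ε' < (b - a) / 2)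
    (g : ℝ → ℂ) (hg : MemLp g 2 volume) :
    ∀ᵐ ξ : ℝ,
      fourierSideP ρ (-a) a ε ε (fourierSideP ρ (-b) b ε' ε' g) ξ =
          fourierSideP ρ (-a) a ε ε g ξ ∧
      fourierSideP ρ (-b) b ε' ε' (fourierSideP ρ (-a) a ε ε g) ξ =
          fourierSideP ρ (-a) a ε ε g ξ := by
  have hsum : ε + ε' < b - a := by linarith
  have hρne : ∀ x : ℝ, ρ x ≠ 0 → -1 < x := by
    intro x hx
    by_contra h
    push_neg at h
    exact hx (hρ0 x h)
  have hIbound : ∀ η, bell ρ (-a) a ε ε η ≠ 0 → -a - ε < η ∧ η < a + ε := by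
    intro η hη
    simp only [bell] at hη
    have h1 : ρ ((η - -a) / ε) ≠ 0 := fun h => hη (by rw [h]; ring)
    have h2 : ρ ((a - η) / ε) ≠ 0 := fun h => hη (by rw [h]; ring)
    have b1 := hρne _ h1
    have b2 := hρne _ h2
    rw [lt_div_iff₀ hε] at b1 b2
    constructor <;> linarith
  have L1 : ∀ η, bell ρ (-b) b ε' ε' η * bell ρ (-a) a ε ε η = bell ρ (-a) a ε ε η := by
    intro η
    rcases eq_or_ne (bell ρ (-a) a ε ε η) 0 with h | h
    · rw [h, mul_zero]
    · obtain ⟨hl, hr⟩ := hIbound η h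
      have e1 : ρ ((η - -b) / ε') = 1 := hρ1 _ (by rw [le_div_iff₀ hε']; linarith)
      have e2 : ρ ((b - η) / ε') = 1 := hρ1 _ (by rw [le_div_iff₀ hε']; linarith)
      simp only [bell]
      rw [e1, e2]
      ring
  have L2 : ∀ η, bell ρ (-a) a ε ε η * bell ρ (-b) b ε' ε' (2 * (-b) - η) = 0 := by
    intro η
    rcases eq_or_ne (bell ρ (-a) a ε ε η) 0 with h | h
    · rw [h, zero_mul]
    · obtain ⟨hl, hr⟩ := hIbound η h
      have e1 : ρ ((2 * (-b) - η - -b) / ε') = 0 := hρ0 _ (by rw [div_le_iff₀ hε']; linarith)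
      simp only [bell]
      rw [e1]
      ring
  have L3 : ∀ η, bell ρ (-a) a ε ε η * bell ρ (-b) b ε' ε' (2 * b - η) = 0 := by
    intro η
    rcases eq_or_ne (bell ρ (-a) a ε ε η) 0 with h | h
    · rw [h, zero_mul]
    · obtain ⟨hl, hr⟩ := hIbound η h
      have e2 : ρ ((b - (2 * b - η)) / ε') = 0 := hρ0 _ (by rw [div_le_iff₀ hε']; linarith)
      simp only [bell]
      rw [e2]
      ring
  have L4 : ∀ ξ, bell ρ (-b) b ε' ε' ξ * bell ρ (-a) a ε ε (2 * (-b) - ξ) = 0 := by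
    intro ξ
    have h := L2 (2 * (-b) - ξ)
    rw [show 2 * (-b) - (2 * (-b) - ξ) = ξ by ring] at h
    linear_combination h
  have L5 : ∀ ξ, bell ρ (-b) b ε' ε' ξ * bell ρ (-a) a ε ε (2 * b - ξ) = 0 := by
    intro ξ
    have h := L3 (2 * b - ξ)
    rw [show 2 * b - (2 * b - ξ) = ξ by ring] at h
    linear_combination h
  set h := fourierSideP ρ (-b) b ε' ε' g with hh
  set h' := fourierSideP ρ (-a) a ε ε g with hh'
  have E : ∀ θ, ((bell ρ (-a) a ε ε θ : ℝ) : ℂ) * h θ =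
      ((bell ρ (-a) a ε ε θ : ℝ) : ℂ) * g θ := by
    intro θ
    simp only [hh, fourierSideP]
    have c1 : bell ρ (-a) a ε ε θ * bell ρ (-b) b ε' ε' θ * bell ρ (-b) b ε' ε' θ =
        bell ρ (-a) a ε ε θ := by linear_combination (bell ρ (-b) b ε' ε' θ + 1) * L1 θ
    have c2 : bell ρ (-a) a ε ε θ * bell ρ (-b) b ε' ε' θ *
        bell ρ (-b) b ε' ε' (2 * (-b) - θ) = 0 := by
      linear_combination bell ρ (-b) b ε' ε' θ * L2 θ
    have c3 : bell ρ (-a) a ε ε θ * bell ρ (-b) b ε' ε' θ *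
        bell ρ (-b) b ε' ε' (2 * b - θ) = 0 := by
      linear_combination bell ρ (-b) b ε' ε' θ * L3 θ
    have c1' : ((bell ρ (-a) a ε ε θ : ℝ) : ℂ) * (bell ρ (-b) b ε' ε' θ : ℝ) *
        (bell ρ (-b) b ε' ε' θ : ℝ) = ((bell ρ (-a) a ε ε θ : ℝ) : ℂ) := by
      exact_mod_cast congrArg (Complex.ofReal) c1
    have c2' : ((bell ρ (-a) a ε ε θ : ℝ) : ℂ) * (bell ρ (-b) b ε' ε' θ : ℝ) *
        (bell ρ (-b) b ε' ε' (2 * (-b) - θ) : ℝ) = 0 := by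
      exact_mod_cast congrArg (Complex.ofReal) c2
    have c3' : ((bell ρ (-a) a ε ε θ : ℝ) : ℂ) * (bell ρ (-b) b ε' ε' θ : ℝ) *
        (bell ρ (-b) b ε' ε' (2 * b - θ) : ℝ) = 0 := by
      exact_mod_cast congrArg (Complex.ofReal) c3
    linear_combination g θ * c1' + g (2 * (-b) - θ) * c2' - g (2 * b - θ) * c3'
  have F : ∀ (θ c : ℝ), c * bell ρ (-a) a ε ε θ = 0 → (c : ℂ) * h' θ = 0 := by
    intro θ c hc
    simp only [hh', fourierSideP]
    have hc2 : (c : ℂ) * ((bell ρ (-a) a ε ε θ : ℝ) : ℂ) = 0 := by exact_mod_cast hc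
    rw [← mul_assoc, hc2, zero_mul]
  have G : ∀ (θ c : ℝ), c * bell ρ (-a) a ε ε θ = bell ρ (-a) a ε ε θ →
      (c : ℂ) * h' θ = h' θ := by
    intro θ c hc
    simp only [hh', fourierSideP]
    have hc2 : (c : ℂ) * ((bell ρ (-a) a ε ε θ : ℝ) : ℂ) =
        ((bell ρ (-a) a ε ε θ : ℝ) : ℂ) := by exact_mod_cast hc
    rw [← mul_assoc, hc2]
  refine Filter.Eventually.of_forall fun ξ => ⟨?_, ?_⟩
  · simp only [hh', fourierSideP]
    rw [E ξ, E (2 * (-a) - ξ), E (2 * a - ξ)]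
  · simp only [fourierSideP]
    have t1 := G ξ (bell ρ (-b) b ε' ε' ξ * bell ρ (-b) b ε' ε' ξ)
      (by linear_combination (bell ρ (-b) b ε' ε' ξ + 1) * L1 ξ)
    have t2 := F (2 * (-b) - ξ) (bell ρ (-b) b ε' ε' ξ) (L4 ξ)
    have t3 := F (2 * b - ξ) (bell ρ (-b) b ε' ε' ξ) (L5 ξ)
    push_cast at t1
    linear_combination t1 + ((bell ρ (-b) b ε' ε' (2 * (-b) - ξ) : ℝ) : ℂ) * t2 -
      ((bell ρ (-b) b ε' ε' (2 * b - ξ) : ℝ) : ℂ) * t3
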